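/- arXiv:1904.10953 — 5 statements merged into one kernel-verified Lean document; each statement's English description precedes it below -/
import Mathlib

section
/- The mixing condition lim_{j→∞} e_{i,j} = 0 for every fixed i holds if and only if ∑_n min(p_n, 1 - p_n) = ∞. -/
/-!
Since `|1 - 2 p| = 1 - 2 min(p, 1 - p)`, mixing says that the tail products `∏_{k > i} (1 - a_k)`
with `a_k = 2 min(p_k, 1 - p_k) ∈ [0, 1]` tend to `0`. The bounds
`1 - ∑ a_k ≤ ∏ (1 - a_k) ≤ exp (-∑ a_k)` show that this happens exactly when `∑ a_k` diverges:
divergence drives the upper bound to `0`, while convergence makes some tail of the series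
smaller than `1/2`, which keeps the products starting after it above `1/2`.
-/

open Filter Finset

theorem one_sub_sum_le_prod_one_sub {ι : Type*} (s : Finset ι) {f : ι → ℝ}
    (h0 : ∀ i, 0 ≤ f i) (h1 : ∀ i, f i ≤ 1) : 1 - ∑ i ∈ s, f i ≤ ∏ i ∈ s, (1 - f i) := by
  classical
  induction s using Finset.induction_on with
  | empty => simp
  | insert a s ha ih =>
    rw [prod_insert ha, sum_insert ha]
    have : 0 ≤ ∑ i ∈ s, f i := sum_nonneg fun i _ => h0 i
    nlinarith [h0 a, h1 a]

theorem prod_one_sub_le_exp_neg_sum {ι : Type*} (s : Finset ι) {f : ι → ℝ}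
    (h1 : ∀ i, f i ≤ 1) : ∏ i ∈ s, (1 - f i) ≤ Real.exp (-∑ i ∈ s, f i) := by
  rw [← sum_neg_distrib, Real.exp_sum]
  exact prod_le_prod (fun i _ => sub_nonneg.2 (h1 i))
    fun i _ => by linarith [Real.add_one_le_exp (-f i)]

theorem exists_sum_Icc_lt_of_summable {a : ℕ → ℝ} (ha : Summable a) {ε : ℝ} (hε : 0 < ε) :
    ∃ N, ∀ j, ∑ k ∈ Icc (N + 1) j, a k < ε := by
  obtain ⟨s, hs⟩ := summable_iff_vanishing_norm.1 ha ε hε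
  refine ⟨s.sup id, fun j => (le_abs_self _).trans_lt (hs _ ?_)⟩
  refine disjoint_left.2 fun k hk hks => ?_
  have hkN : k ≤ s.sup id := le_sup (f := id) hks
  have hNk : s.sup id + 1 ≤ k := (mem_Icc.1 hk).1
  omega

theorem tendsto_sum_Icc_atTop_of_not_summable {a : ℕ → ℝ} (h0 : ∀ n, 0 ≤ a n)
    (ha : ¬Summable a) (i : ℕ) :
    Tendsto (fun j => ∑ k ∈ Icc (i + 1) j, a k) atTop atTop := by
  have hpartial := ((not_summable_iff_tendsto_nat_atTop_of_nonneg h0).1 ha).comp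
    (tendsto_add_atTop_nat 1)
  refine (tendsto_atTop_add_const_right _ (-∑ k ∈ range (i + 1), a k) hpartial).congr' ?_
  filter_upwards [eventually_ge_atTop i] with j hj
  rw [Function.comp_apply, ← sub_eq_add_neg, ← Ico_add_one_right_eq_Icc,
    sum_Ico_eq_sub _ (by omega)]

theorem tendsto_prod_Icc_one_sub_zero_iff {a : ℕ → ℝ} (h0 : ∀ n, 0 ≤ a n) (h1 : ∀ n, a n ≤ 1) :
    (∀ i, Tendsto (fun j => ∏ k ∈ Icc (i + 1) j, (1 - a k)) atTop (nhds 0)) ↔ ¬Summable a := by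
  refine ⟨fun hmix ha => ?_, fun ha i => ?_⟩
  · obtain ⟨N, hN⟩ := exists_sum_Icc_lt_of_summable ha one_half_pos
    have hge : ∀ j, (1 : ℝ) / 2 ≤ ∏ k ∈ Icc (N + 1) j, (1 - a k) := fun j => by
      linarith [one_sub_sum_le_prod_one_sub (Icc (N + 1) j) h0 h1, hN j]
    linarith [ge_of_tendsto' (hmix N) hge]
  · refine squeeze_zero (fun j => prod_nonneg fun k _ => sub_nonneg.2 (h1 k))
      (fun j => prod_one_sub_le_exp_neg_sum _ h1) ?_
    exact Real.tendsto_exp_atBot.comp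
      (tendsto_neg_atTop_atBot.comp (tendsto_sum_Icc_atTop_of_not_summable h0 ha i))

theorem abs_one_sub_two_mul (x : ℝ) : |1 - 2 * x| = 1 - 2 * min x (1 - x) := by
  rcases le_total x (1 - x) with h | h
  · rw [min_eq_left h, abs_of_nonneg (by linarith)]
  · rw [min_eq_right h, abs_of_nonpos (by linarith)]; ring

/-- The mixing condition `lim_{j→∞} e_{i,j} = 0` for every fixed `i` holds if and only if
`∑_n min(p_n, 1 - p_n) = ∞` (i.e. the series is not summable), where
`e_{i,j} = ∏_{k=i+1}^j (1 - 2 p_k)`. -/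
theorem mixing_iff_sum_min_diverges
    (p : ℕ → ℝ) (hp : ∀ n, p n ∈ Set.Icc (0 : ℝ) 1) :
    (∀ i : ℕ, Tendsto (fun j => ∏ k ∈ Finset.Icc (i + 1) j, (1 - 2 * p k)) atTop (nhds 0))
      ↔ ¬ Summable (fun n => min (p n) (1 - p n)) := by
  have h0 (n : ℕ) : 0 ≤ 2 * min (p n) (1 - p n) :=
    mul_nonneg zero_le_two (le_min (hp n).1 (sub_nonneg.2 (hp n).2))
  have h1 (n : ℕ) : 2 * min (p n) (1 - p n) ≤ 1 := by
    linarith [min_le_left (p n) (1 - p n), min_le_right (p n) (1 - p n)]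
  rw [← summable_mul_left_iff two_ne_zero, ← tendsto_prod_Icc_one_sub_zero_iff h0 h1]
  refine forall_congr' fun i => ?_
  rw [tendsto_zero_iff_abs_tendsto_zero]
  simp only [Function.comp_def, abs_prod, abs_one_sub_two_mul]
end

section
/- If ∑_n min(p_n, q_n) = ∞ (mixing), then lim_{n→∞} P(Y_n = 1 | Y_1 = k) = 1/2 for k ∈ {-1, +1}. -/
/-!
The deviation `x n - 1/2` is multiplied by `1 - 2 p_{n+1}` at each step, and
`|1 - 2p| = 1 - 2 min(p, 1 - p) ≤ exp (-2 min(p, 1 - p))`. Hence `|x n - 1/2|` is bounded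
by `|x 1 - 1/2| * exp (-2 ∑ min(p_j, q_j))`, which tends to `0` when the series diverges.
-/

open Filter Finset

theorem abs_one_sub_two_mul_eq (p : ℝ) : |1 - 2 * p| = 1 - 2 * min p (1 - p) := by
  rcases le_total p (1 - p) with h | h
  · rw [min_eq_left h, abs_of_nonneg (by linarith)]
  · rw [min_eq_right h, abs_of_nonpos (by linarith)]
    ring

section Contraction

variable {a y : ℕ → ℝ}

theorem abs_le_mul_exp_neg_sum (hy : ∀ n, |y (n + 1)| ≤ (1 - a n) * |y n|) (n : ℕ) :
    |y n| ≤ |y 0| * Real.exp (-∑ i ∈ range n, a i) := by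
  induction n with
  | zero => simp
  | succ n ih =>
    calc |y (n + 1)| ≤ (1 - a n) * |y n| := hy n
      _ ≤ Real.exp (-a n) * |y n| := by
        gcongr
        linarith [Real.add_one_le_exp (-a n)]
      _ ≤ Real.exp (-a n) * (|y 0| * Real.exp (-∑ i ∈ range n, a i)) := by gcongr
      _ = |y 0| * Real.exp (-∑ i ∈ range (n + 1), a i) := by
        rw [sum_range_succ, neg_add, Real.exp_add]
        ring

theorem tendsto_zero_of_abs_succ_le (ha : ∀ n, 0 ≤ a n) (hdiv : ¬ Summable a)
    (hy : ∀ n, |y (n + 1)| ≤ (1 - a n) * |y n|) :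
    Tendsto y atTop (nhds 0) := by
  have hsum : Tendsto (fun n => ∑ i ∈ range n, a i) atTop atTop :=
    (not_summable_iff_tendsto_nat_atTop_of_nonneg ha).mp hdiv
  have hbound : Tendsto (fun n => |y 0| * Real.exp (-∑ i ∈ range n, a i)) atTop (nhds 0) := by
    simpa using (Real.tendsto_exp_atBot.comp (tendsto_neg_atTop_atBot.comp hsum)).const_mul |y 0|
  exact squeeze_zero_norm (abs_le_mul_exp_neg_sum hy) hbound

end Contraction

theorem mixing_implies_symmetrization_general
    (p : ℕ → ℝ) (hp : ∀ n, p n ∈ Set.Icc (0 : ℝ) 1)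
    (hmix : ¬ Summable (fun n => min (p n) (1 - p n)))
    (x : ℕ → ℝ)
    (hrec : ∀ n ≥ 1, x (n + 1) = p (n + 1) * (1 - x n) + (1 - p (n + 1)) * x n) :
    Tendsto x atTop (nhds (1 / 2)) := by
  set m : ℕ → ℝ := fun n => min (p n) (1 - p n)
  have hm : ∀ n, 0 ≤ m n := fun n => le_min (hp n).1 (by linarith [(hp n).2])
  have hstep : ∀ n, |x (n + 2) - 1 / 2| ≤ (1 - 2 * m (n + 2)) * |x (n + 1) - 1 / 2| := by
    intro n
    rw [← abs_one_sub_two_mul_eq (p (n + 2)), ← abs_mul, hrec (n + 1) (by omega)]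
    exact (congrArg abs (by ring)).le
  have hdiv : ¬ Summable (fun n => 2 * m (n + 2)) := by
    rwa [summable_mul_left_iff two_ne_zero, summable_nat_add_iff 2]
  have hdev := tendsto_zero_of_abs_succ_le (y := fun n => x (n + 1) - 1 / 2)
    (fun n => mul_nonneg zero_le_two (hm (n + 2))) hdiv hstep
  rw [← tendsto_add_atTop_iff_nat 1]
  convert hdev.add_const (1 / 2) using 2 <;> simp

/-- If `∑_n min(p_n, q_n) = ∞` (mixing), then `lim_{n→∞} P(Y_n = 1 | Y_1 = k) = 1/2`
for `k ∈ {-1, +1}`. Here `x n = P(Y_n = 1 | Y_1 = k)` satisfies `x 1 = 1` if `k = 1`,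
`x 1 = 0` if `k = -1`, and the Markov recursion with flip probability `p_{n+1}` at step `n`. -/
theorem mixing_implies_symmetrization
    (p : ℕ → ℝ) (hp : ∀ n, p n ∈ Set.Icc (0 : ℝ) 1)
    (hmix : ¬ Summable (fun n => min (p n) (1 - p n)))
    (k : ℝ) (hk : k = 1 ∨ k = -1)
    (x : ℕ → ℝ) (hx1 : x 1 = if k = 1 then 1 else 0)
    (hrec : ∀ n ≥ 1, x (n + 1) = p (n + 1) * (1 - x n) + (1 - p (n + 1)) * x n) :
    Tendsto x atTop (nhds (1 / 2)) :=
  mixing_implies_symmetrization_general p hp hmix x hrec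
end

section
/- The martingale increments satisfy Var(M_{n+1} - M_n) = a_{n+1}² - (1 - a_n)² = 4 a_{n+1}² p_{n+1} q_{n+1}. -/
/-!
Since `Y_{n+1} = Y_n X_{n+1}`, the increment is `M_{n+1} - M_n = Y_n ((1 - a_n) + a_{n+1} X_{n+1})`.
The recursion `a_n = 1 + (1 - 2 p_{n+1}) a_{n+1}` makes the second factor centred, and it is
independent of the sign `Y_n`, so the increment has the variance of `a_{n+1} X_{n+1}`, namely
`a_{n+1}² (1 - (1 - 2 p_{n+1})²)`. Rewriting with the recursion gives both closed forms.
-/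

open MeasureTheory ProbabilityTheory Finset

lemma prod_Icc_add_one_add_succ_eq_mul {M : Type*} [CommMonoid M] (c : ℕ → M) (n i : ℕ) :
    ∏ k ∈ Icc (n + 1) (n + (i + 1)), c k
      = c (n + 1) * ∏ k ∈ Icc (n + 1 + 1) (n + 1 + i), c k := by
  rw [← prod_insert (by simp), insert_Icc_add_one_left_eq_Icc (by omega), ← add_assoc,
    add_right_comm]

lemma eq_one_add_mul_of_hasSum_prod_Icc {R : Type*} [CommRing R] [TopologicalSpace R]
    [IsTopologicalRing R] [T2Space R] {c : ℕ → R} {n : ℕ} {x y : R}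
    (hx : HasSum (fun i => ∏ k ∈ Icc (n + 1) (n + i), c k) x)
    (hy : HasSum (fun i => ∏ k ∈ Icc (n + 1 + 1) (n + 1 + i), c k) y) :
    x = 1 + c (n + 1) * y := by
  set e : ℕ → R := fun i => ∏ k ∈ Icc (n + 1) (n + i), c k
  have hshift : HasSum (fun i => e (i + 1)) (c (n + 1) * y) := by
    simpa only [e, prod_Icc_add_one_add_succ_eq_mul] using hy.mul_left (c (n + 1))
  have hsum := (hasSum_nat_add_iff (f := e) 1).mp hshift
  rw [sum_range_one, add_comm] at hsum
  simpa [e] using hx.unique hsum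

section Variance

variable {Ω : Type*} {mΩ : MeasurableSpace Ω} {P : Measure Ω}

lemma variance_mul_eq_of_indepFun_of_sq_eq_one {Y W : Ω → ℝ} (hYW : IndepFun Y W P)
    (hY : AEStronglyMeasurable Y P) (hW : AEStronglyMeasurable W P)
    (hY_sq : ∀ᵐ ω ∂P, Y ω ^ 2 = 1) (hW_mean : P[W] = 0) :
    variance (Y * W) P = variance W P := by
  have hYW_mean : P[Y * W] = 0 := by
    rw [hYW.integral_mul_eq_mul_integral hY hW, hW_mean, mul_zero]
  rw [variance_of_integral_eq_zero (hY.mul hW).aemeasurable hYW_mean,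
    variance_of_integral_eq_zero hW.aemeasurable hW_mean]
  refine integral_congr_ae ?_
  filter_upwards [hY_sq] with ω hω
  simp only [Pi.mul_apply, mul_pow, hω, one_mul]

lemma memLp_top_of_sq_eq_one {X : Ω → ℝ} (hX : AEStronglyMeasurable X P)
    (hX_sq : ∀ᵐ ω ∂P, X ω ^ 2 = 1) : MemLp X ⊤ P := by
  refine memLp_top_of_bound hX 1 ?_
  filter_upwards [hX_sq] with ω hω
  rw [Real.norm_eq_abs, ← abs_one, ← sq_le_sq, hω, one_pow]

lemma variance_eq_one_sub_sq_of_sq_eq_one [IsProbabilityMeasure P] {X : Ω → ℝ}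
    (hX : AEStronglyMeasurable X P) (hX_sq : ∀ᵐ ω ∂P, X ω ^ 2 = 1) :
    variance X P = 1 - P[X] ^ 2 := by
  have hX_sq_mean : P[X ^ 2] = 1 := by
    rw [integral_congr_ae (f := X ^ 2) (g := fun _ => 1) (hX_sq.mono fun _ h => h),
      integral_const, probReal_univ, one_smul]
  rw [variance_eq_sub ((memLp_top_of_sq_eq_one hX hX_sq).mono_exponent le_top), hX_sq_mean]

lemma variance_mul_const_add_mul_of_indepFun [IsProbabilityMeasure P] {Y Z : Ω → ℝ}
    (hYZ : IndepFun Y Z P) (hY : AEStronglyMeasurable Y P) (hZ : Measurable Z)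
    (hY_sq : ∀ᵐ ω ∂P, Y ω ^ 2 = 1) (hZ_sq : ∀ᵐ ω ∂P, Z ω ^ 2 = 1) {u v : ℝ}
    (hmean : u + v * P[Z] = 0) :
    variance (fun ω => Y ω * (u + v * Z ω)) P = v ^ 2 * (1 - P[Z] ^ 2) := by
  have hW : Measurable fun ω => u + v * Z ω := (hZ.const_mul v).const_add u
  have hYW : IndepFun Y (fun ω => u + v * Z ω) P :=
    hYZ.comp measurable_id ((measurable_id.const_mul v).const_add u)
  have hZ_int : Integrable Z P :=
    (memLp_top_of_sq_eq_one hZ.aestronglyMeasurable hZ_sq).integrable le_top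
  have hW_mean : ∫ ω, u + v * Z ω ∂P = 0 := by
    rw [integral_add (integrable_const u) (hZ_int.const_mul v), integral_const, probReal_univ,
      one_smul, integral_const_mul, hmean]
  change variance (Y * fun ω => u + v * Z ω) P = _
  rw [variance_mul_eq_of_indepFun_of_sq_eq_one hYW hY hW.aestronglyMeasurable hY_sq hW_mean,
    variance_const_add (hZ.const_mul v).aestronglyMeasurable, variance_const_mul,
    variance_eq_one_sub_sq_of_sq_eq_one hZ.aestronglyMeasurable hZ_sq]

end Variance

theorem martingale_increment_variance_general
    {Ω : Type*} {mΩ : MeasurableSpace Ω} (P : Measure Ω) [IsProbabilityMeasure P]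
    (p : ℕ → ℝ)
    (X : ℕ → Ω → ℝ)
    (hXmeas : ∀ k, Measurable (X k))
    (hXindep : iIndepFun X P)
    (hXval : ∀ k ω, X k ω = 1 ∨ X k ω = -1)
    (hXmean : ∀ k, ∫ ω, X k ω ∂P = 1 - 2 * p k)
    (Y : ℕ → Ω → ℝ)
    (hY : ∀ n ω, Y n ω = ∏ k ∈ Finset.Icc 1 n, X k ω)
    (a : ℕ → ℝ)
    (ha : ∀ n, HasSum (fun i => ∏ k ∈ Finset.Icc (n + 1) (n + i), (1 - 2 * p k)) (a n))
    (M : ℕ → Ω → ℝ)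
    (hM : ∀ n ω, M n ω = (∑ k ∈ Finset.Ico 1 n, Y k ω) + a n * Y n ω)
    (n : ℕ) (hn : 1 ≤ n) :
    variance (fun ω => M (n + 1) ω - M n ω) P = (a (n + 1)) ^ 2 - (1 - a n) ^ 2 ∧
    variance (fun ω => M (n + 1) ω - M n ω) P
      = 4 * (a (n + 1)) ^ 2 * p (n + 1) * (1 - p (n + 1)) := by
  have hrec : a n = 1 + (1 - 2 * p (n + 1)) * a (n + 1) :=
    eq_one_add_mul_of_hasSum_prod_Icc (ha n) (ha (n + 1))
  have hX_sq : ∀ k ω, X k ω ^ 2 = 1 := fun k ω => sq_eq_one_iff.mpr (hXval k ω)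
  have hY_sq : ∀ ω, Y n ω ^ 2 = 1 := fun ω => by
    rw [hY, ← prod_pow]
    exact prod_eq_one fun k _ => hX_sq k ω
  have hY_prod : Y n = ∏ k ∈ Icc 1 n, X k := funext fun ω => by rw [hY, prod_apply]
  have hY_meas : Measurable (Y n) := by
    rw [hY_prod]
    fun_prop
  have hindep : IndepFun (Y n) (X (n + 1)) P := by
    rw [hY_prod]
    exact hXindep.indepFun_finsetProd_of_notMem hXmeas (by simp)
  have hincr : (fun ω => M (n + 1) ω - M n ω)
      = fun ω => Y n ω * ((1 - a n) + a (n + 1) * X (n + 1) ω) := by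
    funext ω
    rw [hM, hM, sum_Ico_succ_top hn, hY (n + 1), prod_Icc_succ_top (by omega), ← hY]
    ring
  have hmean : (1 - a n) + a (n + 1) * P[X (n + 1)] = 0 := by
    rw [hXmean]
    linear_combination -hrec
  have hvar : variance (fun ω => M (n + 1) ω - M n ω) P
      = a (n + 1) ^ 2 * (1 - (1 - 2 * p (n + 1)) ^ 2) := by
    rw [hincr, variance_mul_const_add_mul_of_indepFun hindep hY_meas.aestronglyMeasurable
      (hXmeas _) (ae_of_all _ hY_sq) (ae_of_all _ (hX_sq _)) hmean, hXmean]
  constructor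
  · rw [hvar, hrec]
    ring
  · rw [hvar]
    ring

/-- The increments of the approximating martingale `M_n = Y_1 + ⋯ + Y_{n-1} + a_n Y_n`
satisfy `Var(M_{n+1} - M_n) = a_{n+1}² - (1 - a_n)² = 4 a_{n+1}² p_{n+1} q_{n+1}`. -/
theorem martingale_increment_variance
    {Ω : Type*} {mΩ : MeasurableSpace Ω} (P : Measure Ω) [IsProbabilityMeasure P]
    (p : ℕ → ℝ) (hp : ∀ n, p n ∈ Set.Icc (0 : ℝ) 1) (hp1 : p 1 = 1 / 2)
    (X : ℕ → Ω → ℝ)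
    (hXmeas : ∀ k, Measurable (X k))
    (hXindep : iIndepFun X P)
    (hXval : ∀ k ω, X k ω = 1 ∨ X k ω = -1)
    (hXmean : ∀ k, ∫ ω, X k ω ∂P = 1 - 2 * p k)
    (Y : ℕ → Ω → ℝ)
    (hY : ∀ n ω, Y n ω = ∏ k ∈ Finset.Icc 1 n, X k ω)
    (a : ℕ → ℝ)
    (habs : ∀ n, Summable (fun i => |∏ k ∈ Finset.Icc (n + 1) (n + i), (1 - 2 * p k)|))
    (ha : ∀ n, HasSum (fun i => ∏ k ∈ Finset.Icc (n + 1) (n + i), (1 - 2 * p k)) (a n))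
    (M : ℕ → Ω → ℝ)
    (hM : ∀ n ω, M n ω = (∑ k ∈ Finset.Ico 1 n, Y k ω) + a n * Y n ω)
    (n : ℕ) (hn : 1 ≤ n) :
    variance (fun ω => M (n + 1) ω - M n ω) P = (a (n + 1)) ^ 2 - (1 - a n) ^ 2 ∧
    variance (fun ω => M (n + 1) ω - M n ω) P
      = 4 * (a (n + 1)) ^ 2 * p (n + 1) * (1 - p (n + 1)) :=
  martingale_increment_variance_general (mΩ := mΩ) P p X hXmeas hXindep hXval hXmean Y hY a ha M hM
    n hn
end

section
/- Suppose q_n → 0, ∑_n q_n = ∞, and lim_{n→∞} q_{n+1}/q_n = 1. Then lim_{n→∞} a_n = 1/2, where a_n := ∑_{i=0}^∞ (-1)^i ∏_{j=1}^{i} (1 - 2 q_{n+j}). -/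
open Filter Finset

/-!
Write `w_i` for the products, so that `a_n = ∑ (-1)^i w_i` with `w_0 = 1`, and let
`d_i = w_i - w_{i+1} = 2 q_{n+i+1} w_i ≥ 0`. Pairing an alternating series with its shift turns
`∑ (-1)^i x_i = s` into `∑ (-1)^i (x_i - x_{i+1}) = 2 s - x_0`; doing this twice gives
`∑ (-1)^i (d_i - d_{i+1}) = 4 a_n - 2 - d_0`. Once `q ≤ δ` and `|q_{m+1} - q_m| ≤ δ q_m` beyond `n`,
each `|d_i - d_{i+1}|` is at most `3 δ d_i`, and `∑ d_i ≤ w_0 = 1` telescopes, so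
`|4 a_n - 2| ≤ 2 q_{n+1} + 3 δ ≤ 5 δ`.
-/

theorem HasSum.alternating_sub_succ {R : Type*} [Ring R] [TopologicalSpace R]
    [IsTopologicalAddGroup R] {x : ℕ → R} {s : R}
    (h : HasSum (fun i => (-1) ^ i * x i) s) :
    HasSum (fun i => (-1) ^ i * (x i - x (i + 1))) (2 * s - x 0) := by
  have hshift : HasSum (fun i => (-1) ^ (i + 1) * x (i + 1)) (s - x 0) := by
    simpa using (hasSum_nat_add_iff' 1).2 h
  convert h.add hshift using 1
  · funext i
    rw [pow_succ]
    noncomm_ring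
  · noncomm_ring

theorem abs_sub_le_mul_of_abs_div_sub_one_lt {x y δ : ℝ} (hx : 0 ≤ x) (hδ : δ ≤ 1)
    (h : |y / x - 1| < δ) : |y - x| ≤ δ * x := by
  rcases hx.eq_or_lt with rfl | hx
  · rw [div_zero, zero_sub, abs_neg, abs_one] at h
    linarith
  · rw [div_sub_one hx.ne', abs_div, abs_of_pos hx, div_lt_iff₀ hx] at h
    exact h.le

theorem abs_sub_le_of_slowly_varying (W r₀ r₁ δ : ℝ) (hW : 0 ≤ W) (hr₀ : 0 ≤ r₀) (hr₁ : 0 ≤ r₁)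
    (hr₁δ : r₁ ≤ δ) (hvar : |r₁ - r₀| ≤ δ * r₀) :
    |2 * r₀ * W - 2 * r₁ * (W * (1 - 2 * r₀))| ≤ 3 * δ * (2 * r₀ * W) := by
  have key : 2 * r₀ * W - 2 * r₁ * (W * (1 - 2 * r₀)) = 2 * W * ((r₀ - r₁) + 2 * r₀ * r₁) := by
    ring
  rw [key, abs_mul, abs_of_nonneg (by positivity : 0 ≤ 2 * W)]
  have hfactor : |(r₀ - r₁) + 2 * r₀ * r₁| ≤ 3 * δ * r₀ := by
    calc |(r₀ - r₁) + 2 * r₀ * r₁| ≤ |r₀ - r₁| + |2 * r₀ * r₁| := abs_add_le _ _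
      _ ≤ δ * r₀ + 2 * r₀ * δ := by
        rw [abs_sub_comm, abs_of_nonneg (by positivity : 0 ≤ 2 * r₀ * r₁)]
        gcongr
      _ = 3 * δ * r₀ := by ring
  calc 2 * W * |(r₀ - r₁) + 2 * r₀ * r₁| ≤ 2 * W * (3 * δ * r₀) := by gcongr
    _ = 3 * δ * (2 * r₀ * W) := by ring

theorem abs_sub_half_le_of_hasSum_alternating {r w : ℕ → ℝ} {δ a : ℝ}
    (hr : ∀ i, r i ∈ Set.Icc (0 : ℝ) (1 / 2))
    (hrδ : ∀ i, r i ≤ δ) (hvar : ∀ i, |r (i + 1) - r i| ≤ δ * r i)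
    (hw0 : w 0 = 1) (hw : ∀ i, w (i + 1) = w i * (1 - 2 * r i))
    (ha : HasSum (fun i => (-1) ^ i * w i) a) :
    |a - 1 / 2| ≤ 5 / 4 * δ := by
  have hw_nonneg : ∀ i, 0 ≤ w i := by
    intro i
    induction i with
    | zero => simp [hw0]
    | succ i ih => rw [hw]; exact mul_nonneg ih (by linarith [(hr i).2])
  set d : ℕ → ℝ := fun i => w i - w (i + 1) with hd
  have hd_eq : ∀ i, d i = 2 * r i * w i := fun i => by simp only [hd, hw]; ring
  have hd_nonneg : ∀ i, 0 ≤ d i := fun i => by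
    rw [hd_eq]
    exact mul_nonneg (by linarith [(hr i).1]) (hw_nonneg i)
  have hd_partial : ∀ n, ∑ i ∈ range n, d i ≤ 1 := fun n => by
    rw [sum_range_sub', hw0]; linarith [hw_nonneg n]
  have hd_sum : HasSum (fun i => 3 * δ * d i) (3 * δ * ∑' i, d i) :=
    (summable_of_sum_range_le hd_nonneg hd_partial).hasSum.mul_left _
  have h2 : HasSum (fun i => (-1) ^ i * (d i - d (i + 1))) (2 * (2 * a - 1) - d 0) := by
    simpa only [hd, hw0, zero_add] using ha.alternating_sub_succ.alternating_sub_succ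
  have hbound : |2 * (2 * a - 1) - d 0| ≤ 3 * δ * ∑' i, d i := by
    refine h2.norm_le_of_bounded hd_sum fun i => ?_
    rw [Real.norm_eq_abs, abs_mul, abs_neg_one_pow, one_mul, hd_eq, hd_eq, hw]
    exact abs_sub_le_of_slowly_varying _ _ _ _ (hw_nonneg i) (hr i).1 (hr (i + 1)).1 (hrδ _)
      (hvar i)
  have hδ : 0 ≤ δ := (hr 0).1.trans (hrδ 0)
  have htsum : 3 * δ * ∑' i, d i ≤ 3 * δ :=
    mul_le_of_le_one_right (by positivity) (Real.tsum_le_of_sum_range_le hd_nonneg hd_partial)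
  have hd0 : d 0 = 2 * r 0 := by rw [hd_eq, hw0, mul_one]
  rw [hd0] at hbound
  rw [abs_le] at hbound ⊢
  constructor <;> linarith [(hr 0).1, hrδ 0]

theorem eventually_le_and_abs_sub_le {q : ℕ → ℝ} (hq : ∀ n, 0 ≤ q n)
    (hq0 : Tendsto q atTop (nhds 0))
    (hratio : Tendsto (fun n => q (n + 1) / q n) atTop (nhds 1)) {δ : ℝ} (hδ : 0 < δ)
    (hδ1 : δ ≤ 1) : ∀ᶠ n in atTop, q n ≤ δ ∧ |q (n + 1) - q n| ≤ δ * q n := by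
  filter_upwards [hq0.eventually (eventually_le_nhds hδ),
    hratio.eventually (Metric.ball_mem_nhds 1 hδ)] with n hqn hrn
  exact ⟨hqn, abs_sub_le_mul_of_abs_div_sub_one_lt (hq n) hδ1 hrn⟩

theorem heating_a_tendsto_half_general
    (q : ℕ → ℝ) (hq : ∀ n, q n ∈ Set.Icc (0 : ℝ) (1 / 2))
    (hq0 : Tendsto q atTop (nhds 0))
    (hratio : Tendsto (fun n => q (n + 1) / q n) atTop (nhds 1))
    (a : ℕ → ℝ)
    (ha : ∀ n, HasSum
      (fun i => (-1 : ℝ) ^ i * ∏ j ∈ Finset.Icc 1 i, (1 - 2 * q (n + j))) (a n)) :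
    Tendsto a atTop (nhds (1 / 2)) := by
  refine Metric.tendsto_nhds.2 fun ε hε => ?_
  set δ := min (ε / 2) 1
  have hδ : 0 < δ := lt_min (by linarith) one_pos
  obtain ⟨N, hN⟩ := (eventually_le_and_abs_sub_le (fun n => (hq n).1) hq0 hratio hδ
    (min_le_right _ _)).exists_forall_of_atTop
  filter_upwards [eventually_ge_atTop N] with n hn
  have hest := abs_sub_half_le_of_hasSum_alternating (r := fun i => q (n + i + 1))
    (fun i => hq _) (fun i => (hN _ (by omega)).1)
    (fun i => (hN (n + i + 1) (by omega)).2) (by simp)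
    (fun i => by rw [prod_Icc_succ_top (by omega), add_assoc]) (ha n)
  rw [Real.dist_eq]
  linarith [min_le_left (ε / 2) 1]

/-- Suppose `q_n → 0`, `∑ q_n = ∞`, and `q_{n+1}/q_n → 1`. Then `a_n → 1/2`, where
`a_n = ∑_{i=0}^∞ (-1)^i ∏_{j=1}^i (1 - 2 q_{n+j})`. -/
theorem heating_a_tendsto_half
    (q : ℕ → ℝ) (hq : ∀ n, q n ∈ Set.Icc (0 : ℝ) (1 / 2))
    (hq0 : Tendsto q atTop (nhds 0))
    (hqdiv : ¬ Summable q)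
    (hratio : Tendsto (fun n => q (n + 1) / q n) atTop (nhds 1))
    (a : ℕ → ℝ)
    (ha : ∀ n, HasSum
      (fun i => (-1 : ℝ) ^ i * ∏ j ∈ Finset.Icc 1 i, (1 - 2 * q (n + j))) (a n)) :
    Tendsto a atTop (nhds (1 / 2)) :=
  heating_a_tendsto_half_general q hq hq0 hratio a ha
end

section
/- If p_n ≤ 1/2 for all n, then Var(S_N / N) = 1/N + (2/N²) ∑_{1 ≤ i < j ≤ N} e_{i,j}, and this quantity is nonincreasing in each p_k (k ≥ 2). -/
/-! Since every `X k` is `±1`, for `i ≤ j` the product `Y i * Y j` telescopes to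
`∏_{i < k ≤ j} X k`, so independence gives `E[Y i * Y j] = e_{i,j}`; and `E[Y n] = 0` because
`Y n` contains the factor `X 1`, of mean `1 - 2 p_1 = 0`. Expanding the variance of the sum into
covariances and pairing `(i, j)` with `(j, i)` gives the formula. Monotonicity holds because each
`e_{i,j}` is a product of nonnegative factors `1 - 2 p_k`, each nonincreasing in `p_k`. -/

open MeasureTheory ProbabilityTheory Finset

theorem Finset.sum_Icc_sum_Icc_eq_of_symm {M : Type*} [NonAssocSemiring M] (g : ℕ → ℕ → M)
    (hg : ∀ i j, g i j = g j i) (a b : ℕ) :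
    ∑ i ∈ Icc a b, ∑ j ∈ Icc a b, g i j
      = ∑ i ∈ Icc a b, g i i + 2 * ∑ i ∈ Icc a b, ∑ j ∈ Ioc i b, g i j := by
  have split : ∀ i ∈ Icc a b,
      ∑ j ∈ Icc a b, g i j = ∑ j ∈ Ico a i, g i j + (g i i + ∑ j ∈ Ioc i b, g i j) := by
    intro i hi
    have hIcc : Icc a b = Ico a i ∪ Icc i b := by
      ext j; simp only [mem_union, mem_Icc, mem_Ico] at hi ⊢; omega
    have hdisj : Disjoint (Ico a i) (Icc i b) :=
      disjoint_left.2 fun j h₁ h₂ => by simp only [mem_Ico, mem_Icc] at h₁ h₂; omega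
    rw [hIcc, sum_union hdisj, Icc_eq_cons_Ioc (mem_Icc.1 hi).2, sum_cons]
  have below :
      ∑ i ∈ Icc a b, ∑ j ∈ Ico a i, g i j = ∑ i ∈ Icc a b, ∑ j ∈ Ioc i b, g i j := by
    rw [sum_comm' (t' := Icc a b) (s' := fun j => Ioc j b) (fun i j => by
      simp only [mem_Icc, mem_Ico, mem_Ioc]; omega)]
    simp_rw [hg]
  rw [sum_congr rfl split, sum_add_distrib, sum_add_distrib, below, two_mul]
  abel

theorem Finset.prod_Ioc_mul_prod_Ioc_of_mul_self_eq_one {M : Type*} [CommMonoid M] {x : ℕ → M}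
    (hx : ∀ k, x k * x k = 1) {a b c : ℕ} (hab : a ≤ b) (hbc : b ≤ c) :
    (∏ k ∈ Ioc a b, x k) * ∏ k ∈ Ioc a c, x k = ∏ k ∈ Ioc b c, x k := by
  rw [← prod_Ioc_consecutive x hab hbc, ← mul_assoc, ← prod_mul_distrib,
    prod_congr rfl fun k _ => hx k, prod_const_one, one_mul]

theorem ProbabilityTheory.iIndepFun.integral_finset_prod {ι Ω 𝕜 : Type*} [RCLike 𝕜]
    [MeasurableSpace Ω] {μ : Measure Ω} {X : ι → Ω → 𝕜} (hX : iIndepFun X μ)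
    (mX : ∀ i, AEStronglyMeasurable (X i) μ) (s : Finset ι) :
    ∫ ω, ∏ i ∈ s, X i ω ∂μ = ∏ i ∈ s, ∫ ω, X i ω ∂μ := by
  have := (hX.precomp (g := ((↑) : s → ι)) Subtype.val_injective)
    |>.integral_fun_prod_eq_prod_integral fun i => mX i
  rw [← prod_coe_sort s, ← this]
  congr with ω
  exact (prod_coe_sort s _).symm

section SignProducts

variable {Ω : Type*} [MeasurableSpace Ω] {P : Measure Ω} {X : ℕ → Ω → ℝ}

theorem memLp_two_finset_prod_of_abs_eq_one {ι : Type*} [IsFiniteMeasure P] {X : ι → Ω → ℝ}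
    (hXmeas : ∀ k, Measurable (X k)) (hX1 : ∀ k ω, |X k ω| = 1) (s : Finset ι) :
    MemLp (fun ω => ∏ k ∈ s, X k ω) 2 P :=
  MemLp.of_bound (Finset.measurable_prod s fun k _ => hXmeas k).aestronglyMeasurable 1
    (ae_of_all _ fun ω => by simp [Real.norm_eq_abs, hX1])

theorem integral_prod_Icc_one_eq_zero (hXmeas : ∀ k, Measurable (X k)) (hXindep : iIndepFun X P)
    (hmean1 : ∫ ω, X 1 ω ∂P = 0) {n : ℕ} (hn : 1 ≤ n) :
    ∫ ω, ∏ k ∈ Icc 1 n, X k ω ∂P = 0 := by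
  rw [hXindep.integral_finset_prod fun k => (hXmeas k).aestronglyMeasurable]
  exact prod_eq_zero (mem_Icc.2 ⟨le_rfl, hn⟩) hmean1

theorem covariance_prod_Icc_one (hXmeas : ∀ k, Measurable (X k)) (hXindep : iIndepFun X P)
    (hX1 : ∀ k ω, |X k ω| = 1) (hmean1 : ∫ ω, X 1 ω ∂P = 0) {i j : ℕ} (hi : 1 ≤ i)
    (hij : i ≤ j) :
    cov[fun ω => ∏ k ∈ Icc 1 i, X k ω, fun ω => ∏ k ∈ Icc 1 j, X k ω; P]
      = ∏ k ∈ Ioc i j, ∫ ω, X k ω ∂P := by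
  have hprod (ω : Ω) :
      (∏ k ∈ Icc 1 i, X k ω) * ∏ k ∈ Icc 1 j, X k ω = ∏ k ∈ Ioc i j, X k ω := by
    rw [← zero_add 1, Icc_add_one_left_eq_Ioc, Icc_add_one_left_eq_Ioc]
    exact prod_Ioc_mul_prod_Ioc_of_mul_self_eq_one
      (fun k => by rw [← abs_mul_abs_self, hX1, one_mul]) i.zero_le hij
  simp only [covariance, integral_prod_Icc_one_eq_zero hXmeas hXindep hmean1 hi,
    integral_prod_Icc_one_eq_zero hXmeas hXindep hmean1 (hi.trans hij), sub_zero, hprod]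
  exact hXindep.integral_finset_prod (fun k => (hXmeas k).aestronglyMeasurable) _

theorem variance_sum_prod_Icc_one [IsFiniteMeasure P] (hXmeas : ∀ k, Measurable (X k))
    (hXindep : iIndepFun X P) (hX1 : ∀ k ω, |X k ω| = 1) (hmean1 : ∫ ω, X 1 ω ∂P = 0)
    (N : ℕ) :
    Var[fun ω => ∑ n ∈ Icc 1 N, ∏ k ∈ Icc 1 n, X k ω; P]
      = N + 2 * ∑ i ∈ Icc 1 N, ∑ j ∈ Ioc i N, ∏ k ∈ Ioc i j, ∫ ω, X k ω ∂P := by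
  rw [variance_fun_sum' fun n _ => memLp_two_finset_prod_of_abs_eq_one hXmeas hX1 _,
    sum_Icc_sum_Icc_eq_of_symm _ (fun i j => covariance_comm _ _) 1 N]
  have hcov : ∀ i ∈ Icc 1 N, ∀ j, i ≤ j →
      cov[fun ω => ∏ k ∈ Icc 1 i, X k ω, fun ω => ∏ k ∈ Icc 1 j, X k ω; P]
        = ∏ k ∈ Ioc i j, ∫ ω, X k ω ∂P :=
    fun i hi j hij => covariance_prod_Icc_one hXmeas hXindep hX1 hmean1 (mem_Icc.1 hi).1 hij
  rw [sum_congr rfl fun i hi => hcov i hi i le_rfl,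
    sum_congr rfl fun i hi => sum_congr rfl fun j hj => hcov i hi j (mem_Ioc.1 hj).1.le]
  simp

end SignProducts

theorem variance_formula_and_monotone_general
    {Ω : Type*} [MeasurableSpace Ω] (P : Measure Ω) [IsProbabilityMeasure P]
    (p : ℕ → ℝ) (hp1 : p 1 = 1 / 2)
    (X : ℕ → Ω → ℝ)
    (hXmeas : ∀ k, Measurable (X k))
    (hXindep : iIndepFun X P)
    (hXval : ∀ k ω, X k ω = 1 ∨ X k ω = -1)
    (hXmean : ∀ k, ∫ ω, X k ω ∂P = 1 - 2 * p k)
    (Y : ℕ → Ω → ℝ)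
    (hY : ∀ n ω, Y n ω = ∏ k ∈ Finset.Icc 1 n, X k ω)
    (N : ℕ) :
    variance (fun ω => (∑ k ∈ Finset.Icc 1 N, Y k ω) / N) P
      = 1 / N + 2 / (N : ℝ) ^ 2 *
          ∑ i ∈ Finset.Icc 1 N, ∑ j ∈ Finset.Ioc i N,
            ∏ k ∈ Finset.Icc (i + 1) j, (1 - 2 * p k) ∧
    (∀ p' : ℕ → ℝ, (∀ k, p k ≤ p' k) → (∀ k, p' k ≤ 1 / 2) →
      1 / N + 2 / (N : ℝ) ^ 2 *
          ∑ i ∈ Finset.Icc 1 N, ∑ j ∈ Finset.Ioc i N,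
            ∏ k ∈ Finset.Icc (i + 1) j, (1 - 2 * p' k)
        ≤ 1 / N + 2 / (N : ℝ) ^ 2 *
          ∑ i ∈ Finset.Icc 1 N, ∑ j ∈ Finset.Ioc i N,
            ∏ k ∈ Finset.Icc (i + 1) j, (1 - 2 * p k)) := by
  obtain rfl : Y = fun n ω => ∏ k ∈ Icc 1 n, X k ω := funext fun n => funext (hY n)
  have hX1 : ∀ k ω, |X k ω| = 1 := fun k ω => by rcases hXval k ω with h | h <;> simp [h]
  have hmean1 : ∫ ω, X 1 ω ∂P = 0 := by rw [hXmean, hp1]; norm_num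
  refine ⟨?_, fun p' hpp' hp' => ?_⟩
  · simp only [div_eq_mul_inv]
    rw [variance_mul_const, variance_sum_prod_Icc_one hXmeas hXindep hX1 hmean1]
    simp only [hXmean, Icc_add_one_left_eq_Ioc]
    rcases eq_or_ne (N : ℝ) 0 with hN | hN
    · simp [hN] -- both sides vanish, as `x / 0 = 0`
    · field_simp
  · gcongr with i _ j _ k
    · exact fun k _ => by linarith [hp' k]
    · exact hpp' k

/-- If `p_n ≤ 1/2` for all `n` (and `p_1 = 1/2`), then
`Var(S_N/N) = 1/N + (2/N²) ∑_{1 ≤ i < j ≤ N} e_{i,j}`, and this quantity is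
nonincreasing in each `p_k`: if `p'_k ≥ p_k` for all `k` with `p'_k ≤ 1/2`, then the
corresponding value of the formula is smaller or equal. -/
theorem variance_formula_and_monotone
    {Ω : Type*} [MeasurableSpace Ω] (P : Measure Ω) [IsProbabilityMeasure P]
    (p : ℕ → ℝ) (hp : ∀ n, 0 ≤ p n ∧ p n ≤ 1 / 2) (hp1 : p 1 = 1 / 2)
    (X : ℕ → Ω → ℝ)
    (hXmeas : ∀ k, Measurable (X k))
    (hXindep : iIndepFun X P)
    (hXval : ∀ k ω, X k ω = 1 ∨ X k ω = -1)
    (hXmean : ∀ k, ∫ ω, X k ω ∂P = 1 - 2 * p k)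
    (Y : ℕ → Ω → ℝ)
    (hY : ∀ n ω, Y n ω = ∏ k ∈ Finset.Icc 1 n, X k ω)
    (N : ℕ) (hN : 1 ≤ N) :
    variance (fun ω => (∑ k ∈ Finset.Icc 1 N, Y k ω) / N) P
      = 1 / N + 2 / (N : ℝ) ^ 2 *
          ∑ i ∈ Finset.Icc 1 N, ∑ j ∈ Finset.Ioc i N,
            ∏ k ∈ Finset.Icc (i + 1) j, (1 - 2 * p k) ∧
    (∀ p' : ℕ → ℝ, (∀ k, p k ≤ p' k) → (∀ k, p' k ≤ 1 / 2) →
      1 / N + 2 / (N : ℝ) ^ 2 *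
          ∑ i ∈ Finset.Icc 1 N, ∑ j ∈ Finset.Ioc i N,
            ∏ k ∈ Finset.Icc (i + 1) j, (1 - 2 * p' k)
        ≤ 1 / N + 2 / (N : ℝ) ^ 2 *
          ∑ i ∈ Finset.Icc 1 N, ∑ j ∈ Finset.Ioc i N,
            ∏ k ∈ Finset.Icc (i + 1) j, (1 - 2 * p k)) :=
  variance_formula_and_monotone_general P p hp1 X hXmeas hXindep hXval hXmean Y hY N
end
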